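/- arXiv:math/0503590 — 12 statements merged into one kernel-verified Lean document; each statement's English description precedes it below -/
import Mathlib

section
/- For all real numbers x > 0, y > 0 and every p in the open interval (1/2, 1), one has (x^{p-1/2} - y^{p-1/2})^2 ≤ ((2p-1)^2 / (4p(1-p))) · (x^p - y^p)(y^{p-1} - x^{p-1}). -/
set_option maxHeartbeats 800000

open intervalIntegral in
lemma stmt0_aux (x y p : ℝ) (hy : 0 < y) (hxy : y ≤ x)
    (hp1 : (1/2 : ℝ) < p) (hp2 : p < 1) :
    (x ^ (p - 1 / 2) - y ^ (p - 1 / 2)) ^ 2 ≤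
      (2 * p - 1) ^ 2 / (4 * p * (1 - p)) *
        ((x ^ p - y ^ p) * (y ^ (p - 1) - x ^ (p - 1))) := by
  have hx : 0 < x := lt_of_lt_of_le hy hxy
  have hpp : 0 < p := by linarith
  have h1p : 0 < 1 - p := by linarith
  rcases eq_or_lt_of_le hxy with rfl | hlt
  · simp
  have h0 : (0:ℝ) ∉ Set.uIcc y x := by
    rw [Set.uIcc_of_le hxy]
    rintro ⟨h, -⟩; linarith
  -- closed forms
  have hI1 : ∫ s in y..x, s ^ (p - 1) = (x ^ p - y ^ p) / p := by
    rw [integral_rpow (Or.inr ⟨by intro h; apply absurd h (by norm_num; linarith), h0⟩)]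
    norm_num
  have hI2 : ∫ s in y..x, s ^ (p - 2) = (x ^ (p-1) - y ^ (p-1)) / (p - 1) := by
    rw [integral_rpow (Or.inr ⟨by intro h; apply absurd h (by norm_num; intro h'; linarith), h0⟩),
      show p - 2 + 1 = p - 1 from by ring]
  have hI3 : ∫ s in y..x, s ^ (p - 3/2) = (x ^ (p - 1/2) - y ^ (p - 1/2)) / (p - 1/2) := by
    rw [integral_rpow (Or.inr ⟨by intro h; norm_num at h; linarith, h0⟩),
      show p - 3/2 + 1 = p - 1/2 from by ring]
  set I1 := ∫ s in y..x, s ^ (p - 1) with hI1d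
  set I2 := ∫ s in y..x, s ^ (p - 2) with hI2d
  set I3 := ∫ s in y..x, s ^ (p - 3/2) with hI3d
  -- positivity of I1, I2, I3
  have hxp : y ^ p < x ^ p := Real.rpow_lt_rpow hy.le hlt hpp
  have hxp1 : x ^ (p-1) < y ^ (p-1) := Real.rpow_lt_rpow_of_neg hy hlt (by linarith)
  have hxp12 : y ^ (p-1/2) < x ^ (p-1/2) := Real.rpow_lt_rpow hy.le hlt (by linarith)
  have hI1pos : 0 < I1 := by rw [hI1]; apply div_pos <;> linarith
  have hI2pos : 0 < I2 := by
    rw [hI2]; apply div_pos_of_neg_of_neg <;> linarith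
  have hI3pos : 0 < I3 := by rw [hI3]; apply div_pos <;> linarith
  -- Cauchy-Schwarz via AM-GM with optimal weight
  set s1 := Real.sqrt I1 with hs1
  set s2 := Real.sqrt I2 with hs2
  have hs1p : 0 < s1 := Real.sqrt_pos.mpr hI1pos
  have hs2p : 0 < s2 := Real.sqrt_pos.mpr hI2pos
  have hs1sq : s1 ^ 2 = I1 := Real.sq_sqrt hI1pos.le
  have hs2sq : s2 ^ 2 = I2 := Real.sq_sqrt hI2pos.le
  set l := s2 / s1 with hl
  have hlpos : 0 < l := div_pos hs2p hs1p
  have hint1 : IntervalIntegrable (fun s : ℝ => s ^ (p-1)) MeasureTheory.volume y x :=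
    intervalIntegrable_rpow (Or.inr h0)
  have hint2 : IntervalIntegrable (fun s : ℝ => s ^ (p-2)) MeasureTheory.volume y x :=
    intervalIntegrable_rpow (Or.inr h0)
  have hint3 : IntervalIntegrable (fun s : ℝ => s ^ (p-3/2)) MeasureTheory.volume y x :=
    intervalIntegrable_rpow (Or.inr h0)
  have hmono : I3 ≤ ∫ s in y..x, (l * s ^ (p-1) + l⁻¹ * s ^ (p-2)) / 2 := by
    apply integral_mono_on hxy hint3
      (((hint1.const_mul l).add (hint2.const_mul l⁻¹)).div_const 2)
    intro s hs
    have hs0 : 0 < s := lt_of_lt_of_le hy hs.1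
    have ha : s ^ (p-1) = s ^ ((p-1)/2) * s ^ ((p-1)/2) := by
      rw [← Real.rpow_add hs0]; ring_nf
    have hb : s ^ (p-2) = s ^ ((p-2)/2) * s ^ ((p-2)/2) := by
      rw [← Real.rpow_add hs0]; ring_nf
    have hc : s ^ (p-3/2) = s ^ ((p-1)/2) * s ^ ((p-2)/2) := by
      rw [← Real.rpow_add hs0]; ring_nf
    rw [ha, hb, hc]
    have hll : l * l⁻¹ = 1 := mul_inv_cancel₀ hlpos.ne'
    nlinarith [sq_nonneg (l * s ^ ((p-1)/2) - s ^ ((p-2)/2)), hlpos, hll]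
  have hsum : ∫ s in y..x, (l * s ^ (p-1) + l⁻¹ * s ^ (p-2)) / 2
      = (l * I1 + l⁻¹ * I2) / 2 := by
    rw [integral_div, integral_add (hint1.const_mul l) (hint2.const_mul l⁻¹),
      integral_const_mul, integral_const_mul]
  have hlsum : l * I1 + l⁻¹ * I2 = 2 * (s1 * s2) := by
    rw [hl, ← hs1sq, ← hs2sq]
    field_simp
    ring
  have hCS : I3 ^ 2 ≤ I1 * I2 := by
    rw [hsum, hlsum] at hmono
    clear_value I1 I2 I3 s1 s2
    nlinarith [hI3pos, hmono, hs1sq, hs2sq, mul_pos hs1p hs2p]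
  have hp1ne : p - 1 ≠ 0 := by intro h; linarith
  have hp12ne : p - 1/2 ≠ 0 := by intro h; linarith
  have e1 : x ^ p - y ^ p = p * I1 := by rw [hI1]; field_simp
  have e2 : y ^ (p-1) - x ^ (p-1) = (1 - p) * I2 := by
    rw [hI2]; field_simp; ring
  have e3 : x ^ (p-1/2) - y ^ (p-1/2) = (p - 1/2) * I3 := by
    rw [hI3]; field_simp
    rw [eq_div_iff (by intro h; nlinarith)]; ring
  rw [e1, e2, e3]
  have hc : (2*p-1)^2/(4*p*(1-p)) * (p * I1 * ((1-p) * I2))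
      = (p - 1/2)^2 * (I1 * I2) := by
    field_simp
    ring
  calc ((p - 1/2) * I3) ^ 2 = (p - 1/2)^2 * I3 ^ 2 := by ring
    _ ≤ (p - 1/2)^2 * (I1 * I2) := by
        exact mul_le_mul_of_nonneg_left hCS (sq_nonneg _)
    _ = (2*p-1)^2/(4*p*(1-p)) * (p * I1 * ((1-p) * I2)) := hc.symm

/-- Lemma A.1: for positive `x`, `y` and `p ∈ (1/2, 1)`,
`(x^(p-1/2) - y^(p-1/2))^2 ≤ (2p-1)^2/(4p(1-p)) * (x^p - y^p)(y^(p-1) - x^(p-1))`. -/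
theorem stmt_0 (x y p : ℝ) (hx : 0 < x) (hy : 0 < y)
    (hp : p ∈ Set.Ioo (1 / 2 : ℝ) 1) :
    (x ^ (p - 1 / 2) - y ^ (p - 1 / 2)) ^ 2 ≤
      (2 * p - 1) ^ 2 / (4 * p * (1 - p)) *
        ((x ^ p - y ^ p) * (y ^ (p - 1) - x ^ (p - 1))) := by
  obtain ⟨hp1, hp2⟩ := hp
  rcases le_total y x with h | h
  · exact stmt0_aux x y p hy h hp1 hp2
  · have := stmt0_aux y x p hx h hp1 hp2
    calc (x ^ (p - 1 / 2) - y ^ (p - 1 / 2)) ^ 2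
        = (y ^ (p - 1 / 2) - x ^ (p - 1 / 2)) ^ 2 := by ring
      _ ≤ (2 * p - 1) ^ 2 / (4 * p * (1 - p)) *
        ((y ^ p - x ^ p) * (x ^ (p - 1) - y ^ (p - 1))) := this
      _ = _ := by ring
end

section
/- For every q in the open interval (1, 2), the supremum over z in (0,1) of the quantity z^{2-q}(1 - z^{q-1})^2 / ((1 - z^q)(1 - z^{2-q})) equals (q-1)^2 / (q(2-q)). -/
/-!
Put `c = q - 1` and `z = exp v`. Clearing the positive denominator, and using
`q (2 - q) = 1 - c²`, the bound `powerRatio q z ≤ c² / (1 - c²)` becomes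
`z ^ (1 + c) + z ^ (1 - c) ≤ c² (1 + z²) + 2 (1 - c²) z`, i.e. after dividing by `2 z`,
`cosh (c v) ≤ c² cosh v + 1 - c²`. Since `cosh x = 1 + 2 sinh² (x / 2)`, this is the square of
`sinh (c u) ≤ c sinh u` for `u ≥ 0`, which is convexity of `sinh` on `[0, ∞)`.
The bound is attained in the limit `z → 1`, where each factor `1 - z ^ r` behaves like
`r (1 - z)`.
-/

open Filter Topology Set

namespace Real

theorem convexOn_sinh_Ici : ConvexOn ℝ (Ici 0) sinh := by
  refine MonotoneOn.convexOn_of_deriv (convex_Ici 0) continuous_sinh.continuousOn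
    differentiable_sinh.differentiableOn ?_
  rw [deriv_sinh, interior_Ici]
  exact cosh_strictMonoOn.monotoneOn.mono Ioi_subset_Ici_self

theorem sinh_mul_le_mul_sinh {c v : ℝ} (hc0 : 0 ≤ c) (hc1 : c ≤ 1) (hv : 0 ≤ v) :
    sinh (c * v) ≤ c * sinh v := by
  simpa using convexOn_sinh_Ici.2 (mem_Ici.2 hv) (self_mem_Ici (a := (0 : ℝ))) hc0
    (sub_nonneg.2 hc1) (add_sub_cancel c 1)

theorem cosh_eq_one_add_two_mul_sinh_sq (x : ℝ) : cosh x = 1 + 2 * sinh (x / 2) ^ 2 := by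
  conv_lhs => rw [← mul_div_cancel₀ x (two_ne_zero' ℝ), cosh_two_mul, cosh_sq]
  ring

theorem cosh_mul_le {c : ℝ} (hc : |c| ≤ 1) (v : ℝ) :
    cosh (c * v) ≤ c ^ 2 * cosh v + (1 - c ^ 2) := by
  have hsinh : sinh (|c| * (|v| / 2)) ≤ |c| * sinh (|v| / 2) :=
    sinh_mul_le_mul_sinh (abs_nonneg c) hc (by positivity)
  have hsinh_nonneg : 0 ≤ sinh (|c| * (|v| / 2)) := sinh_nonneg_iff.2 (by positivity)
  rw [← cosh_abs (c * v), ← cosh_abs v, abs_mul, ← sq_abs c, cosh_eq_one_add_two_mul_sinh_sq,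
    cosh_eq_one_add_two_mul_sinh_sq, mul_div_assoc]
  nlinarith [pow_le_pow_left₀ hsinh_nonneg hsinh 2]

end Real

theorem rpow_one_add_add_rpow_one_sub_le {z c : ℝ} (hz : 0 < z) (hc : |c| ≤ 1) :
    z ^ (1 + c) + z ^ (1 - c) ≤ c ^ 2 * (1 + z ^ 2) + 2 * (1 - c ^ 2) * z := by
  obtain ⟨v, rfl⟩ : ∃ v, Real.exp v = z := ⟨Real.log z, Real.exp_log hz⟩
  have hcosh := Real.cosh_mul_le hc v
  rw [Real.cosh_eq, Real.cosh_eq] at hcosh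
  have hexp (b : ℝ) : Real.exp v ^ (1 + b) = Real.exp v * Real.exp (b * v) := by
    rw [← Real.exp_mul, ← Real.exp_add]; ring_nf
  rw [hexp c, sub_eq_add_neg, hexp (-c), neg_mul]
  have hprod (a : ℝ) : Real.exp a * Real.exp (-a) = 1 := by
    rw [← Real.exp_add, add_neg_cancel, Real.exp_zero]
  nlinarith [mul_le_mul_of_nonneg_left hcosh (Real.exp_pos v).le, hprod v, hprod (c * v)]

noncomputable def powerRatio (q z : ℝ) : ℝ :=
  z ^ (2 - q) * (1 - z ^ (q - 1)) ^ 2 / ((1 - z ^ q) * (1 - z ^ (2 - q)))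

theorem powerRatio_le {q z : ℝ} (hq : q ∈ Ioo 0 2) (hz : z ∈ Ioo 0 1) :
    powerRatio q z ≤ (q - 1) ^ 2 / (q * (2 - q)) := by
  obtain ⟨hq0, hq2⟩ := hq
  obtain ⟨hz0, hz1⟩ := hz
  have hden : 0 < (1 - z ^ q) * (1 - z ^ (2 - q)) :=
    mul_pos (sub_pos.2 (Real.rpow_lt_one hz0.le hz1 hq0))
      (sub_pos.2 (Real.rpow_lt_one hz0.le hz1 (sub_pos.2 hq2)))
  have key := rpow_one_add_add_rpow_one_sub_le hz0 (c := q - 1)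
    (abs_le.2 ⟨by linarith, by linarith⟩)
  rw [add_sub_cancel, sub_sub_eq_add_sub, one_add_one_eq_two] at key
  have h1 : z ^ (2 - q) * z ^ (q - 1) = z := by rw [← Real.rpow_add hz0]; norm_num
  have h2 : z ^ q * z ^ (2 - q) = z ^ 2 := by
    rw [← Real.rpow_add hz0, add_sub_cancel, ← Real.rpow_natCast]; norm_num
  have h3 : z * z ^ (q - 1) = z ^ q := by
    rw [← Real.rpow_one_add' hz0.le (by linarith), add_sub_cancel]
  have hnum : z ^ (2 - q) * (1 - z ^ (q - 1)) ^ 2 = z ^ (2 - q) - 2 * z + z ^ q := by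
    linear_combination (z ^ (q - 1) - 2) * h1 + h3
  have hden' : (1 - z ^ q) * (1 - z ^ (2 - q)) = 1 - z ^ q - z ^ (2 - q) + z ^ 2 := by
    linear_combination h2
  unfold powerRatio
  rw [div_le_div_iff₀ hden (by nlinarith), hnum, hden']
  linear_combination key

theorem tendsto_rpow_sub_one_div_sub_one (r : ℝ) :
    Tendsto (fun z : ℝ => (z ^ r - 1) / (z - 1)) (𝓝[≠] 1) (𝓝 r) := by
  have h := Real.hasDerivAt_rpow_const (x := 1) (p := r) (Or.inl one_ne_zero)
  rw [Real.one_rpow, mul_one] at h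
  refine h.tendsto_slope.congr fun z => ?_
  rw [slope_def_field, Real.one_rpow]

theorem tendsto_powerRatio {q : ℝ} (hq0 : q ≠ 0) (hq2 : q ≠ 2) :
    Tendsto (powerRatio q) (𝓝[≠] 1) (𝓝 ((q - 1) ^ 2 / (q * (2 - q)))) := by
  have hlim : Tendsto (fun z : ℝ => z ^ (2 - q) * ((z ^ (q - 1) - 1) / (z - 1)) ^ 2 /
      ((z ^ q - 1) / (z - 1) * ((z ^ (2 - q) - 1) / (z - 1)))) (𝓝[≠] 1)
      (𝓝 (1 ^ (2 - q) * (q - 1) ^ 2 / (q * (2 - q)))) :=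
    ((((Real.continuousAt_rpow_const 1 (2 - q) (Or.inl one_ne_zero)).tendsto.mono_left
      nhdsWithin_le_nhds).mul ((tendsto_rpow_sub_one_div_sub_one _).pow 2)).div
      ((tendsto_rpow_sub_one_div_sub_one _).mul (tendsto_rpow_sub_one_div_sub_one _))
      (mul_ne_zero hq0 (sub_ne_zero.2 hq2.symm)))
  rw [Real.one_rpow, one_mul] at hlim
  refine hlim.congr' (eventually_nhdsWithin_of_forall fun z hz => ?_)
  have hz : z - 1 ≠ 0 := sub_ne_zero.2 hz
  unfold powerRatio
  field_simp
  ring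

/-- Identity (A.1): for `q ∈ (1,2)`,
`sup_{0<z<1} z^(2-q)(1-z^(q-1))^2 / ((1-z^q)(1-z^(2-q))) = (q-1)^2/(q(2-q))`. -/
theorem stmt_1 (q : ℝ) (hq : q ∈ Set.Ioo (1 : ℝ) 2) :
    sSup ((fun z : ℝ =>
        z ^ (2 - q) * (1 - z ^ (q - 1)) ^ 2 /
          ((1 - z ^ q) * (1 - z ^ (2 - q)))) '' Set.Ioo (0 : ℝ) 1) =
      (q - 1) ^ 2 / (q * (2 - q)) := by
  change sSup (powerRatio q '' Ioo 0 1) = _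
  obtain ⟨hq1, hq2⟩ := hq
  have hbound : (q - 1) ^ 2 / (q * (2 - q)) ∈ upperBounds (powerRatio q '' Ioo 0 1) := by
    rintro _ ⟨z, hz, rfl⟩
    exact powerRatio_le ⟨by linarith, hq2⟩ hz
  have hlim : Tendsto (powerRatio q) (𝓝[<] 1) (𝓝 ((q - 1) ^ 2 / (q * (2 - q)))) :=
    (tendsto_powerRatio (by linarith) hq2.ne).mono_left
      (nhdsWithin_mono _ fun _ hz => ne_of_lt hz)
  have hclosure : (q - 1) ^ 2 / (q * (2 - q)) ∈ closure (powerRatio q '' Ioo 0 1) :=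
    mem_closure_of_tendsto hlim
      (Filter.mem_of_superset (Ioo_mem_nhdsLT zero_lt_one) fun _ hz => mem_image_of_mem _ hz)
  exact (isLUB_of_mem_closure hbound hclosure).csSup_eq ((nonempty_Ioo.2 zero_lt_one).image _)
end

section
/- For every p in the open interval (1/2, 1) there exists a constant C > 0, depending only on p, such that for all real x > 0 and y > 0, setting z = (x^p - y^p)(y^{p-1} - x^{p-1}), one has |x^{p-1/2} - y^{p-1/2}| · |x - y| ≤ C · max(x^{1/2} y^{1-p}, y^{1/2} x^{1-p}) · z. -/
open Real

private lemma key_lemma {p x y : ℝ} (hp1 : 1 / 2 < p) (hp2 : p < 1)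
    (hx : 0 < x) (hy : 0 < y) (hxy : y ≤ x) :
    (x ^ (p - 1 / 2) - y ^ (p - 1 / 2)) * (x - y) ≤
      1 / (1 - p) * (x ^ (1 / 2 : ℝ) * y ^ (1 - p)) *
        ((x ^ p - y ^ p) * (y ^ (p - 1) - x ^ (p - 1))) := by
  have h1p : (0:ℝ) < 1 - p := by linarith
  -- step 1 : x^(p-1/2) - y^(p-1/2) ≤ x^(-1/2) * (x^p - y^p)
  have hxp : x ^ (p - 1/2) = x ^ p * x ^ (-(1/2 : ℝ)) := by
    rw [← Real.rpow_add hx]; ring_nf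
  have hyp : y ^ (p - 1/2) = y ^ p * y ^ (-(1/2 : ℝ)) := by
    rw [← Real.rpow_add hy]; ring_nf
  have hinv : x ^ (-(1/2 : ℝ)) ≤ y ^ (-(1/2 : ℝ)) :=
    Real.rpow_le_rpow_of_nonpos hy hxy (by norm_num)
  have h1 : x ^ (p - 1/2) - y ^ (p - 1/2) ≤ x ^ (-(1/2 : ℝ)) * (x ^ p - y ^ p) := by
    rw [hxp, hyp]
    have : y ^ p * x ^ (-(1/2 : ℝ)) ≤ y ^ p * y ^ (-(1/2 : ℝ)) :=
      mul_le_mul_of_nonneg_left hinv (Real.rpow_nonneg hy.le p)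
    nlinarith [this]
  -- step 2 : (1-p)*(x-y) ≤ x * y^(1-p) * (y^(p-1) - x^(p-1))
  have hxy1 : x ^ p * y ^ (1 - p) ≤ p * x + (1 - p) * y :=
    Real.geom_mean_le_arith_mean2_weighted (by linarith) h1p.le hx.le hy.le (by ring)
  have hexp : x * (y ^ (1 - p) * (y ^ (p - 1) - x ^ (p - 1))) = x - x ^ p * y ^ (1 - p) := by
    have e1 : y ^ (1 - p) * y ^ (p - 1) = 1 := by
      rw [← Real.rpow_add hy]; norm_num
    have e2 : x * x ^ (p - 1) = x ^ p := by
      nth_rewrite 1 [← Real.rpow_one x]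
      rw [← Real.rpow_add hx]; ring_nf
    calc x * (y ^ (1 - p) * (y ^ (p - 1) - x ^ (p - 1)))
        = x * (y ^ (1 - p) * y ^ (p - 1)) - (x * x ^ (p - 1)) * y ^ (1 - p) := by ring
      _ = x - x ^ p * y ^ (1 - p) := by rw [e1, e2]; ring
  have h2 : (1 - p) * (x - y) ≤ x * (y ^ (1 - p) * (y ^ (p - 1) - x ^ (p - 1))) := by
    rw [hexp]; nlinarith [hxy1]
  -- combine
  have hA : 0 ≤ x ^ (p - 1/2) - y ^ (p - 1/2) := by
    have := Real.rpow_le_rpow hy.le hxy (by linarith : (0:ℝ) ≤ p - 1/2)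
    linarith
  have hB : 0 ≤ x ^ (-(1/2 : ℝ)) * (x ^ p - y ^ p) := by
    have h3 : y ^ p ≤ x ^ p := Real.rpow_le_rpow hy.le hxy (by linarith)
    exact mul_nonneg (Real.rpow_nonneg hx.le _) (by linarith)
  have hC : 0 ≤ x - y := by linarith
  have hD : x - y ≤ (1 / (1 - p)) * (x * (y ^ (1 - p) * (y ^ (p - 1) - x ^ (p - 1)))) := by
    have := mul_le_mul_of_nonneg_left h2 (le_of_lt (by positivity : (0:ℝ) < 1 / (1 - p)))
    calc x - y = (1 / (1 - p)) * ((1 - p) * (x - y)) := by field_simp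
      _ ≤ _ := this
  have hDnn : 0 ≤ (1 / (1 - p)) * (x * (y ^ (1 - p) * (y ^ (p - 1) - x ^ (p - 1)))) :=
    le_trans (mul_nonneg (by positivity) (by nlinarith))
      (mul_le_mul_of_nonneg_left h2 (le_of_lt (by positivity : (0:ℝ) < 1 / (1 - p))))
  have step : (x ^ (p - 1/2) - y ^ (p - 1/2)) * (x - y) ≤
      (x ^ (-(1/2 : ℝ)) * (x ^ p - y ^ p)) *
        ((1 / (1 - p)) * (x * (y ^ (1 - p) * (y ^ (p - 1) - x ^ (p - 1))))) :=
    mul_le_mul h1 hD hC hB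
  have e3 : x ^ (-(1/2 : ℝ)) * x = x ^ (1/2 : ℝ) := by
    nth_rewrite 2 [← Real.rpow_one x]
    rw [← Real.rpow_add hx]; norm_num
  calc (x ^ (p - 1/2) - y ^ (p - 1/2)) * (x - y)
      ≤ (x ^ (-(1/2 : ℝ)) * (x ^ p - y ^ p)) *
        ((1 / (1 - p)) * (x * (y ^ (1 - p) * (y ^ (p - 1) - x ^ (p - 1))))) := step
    _ = (x ^ (-(1/2 : ℝ)) * x) * (1 / (1 - p) * y ^ (1 - p) *
          ((x ^ p - y ^ p) * (y ^ (p - 1) - x ^ (p - 1)))) := by ring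
    _ = _ := by rw [e3]; ring

/-- Lemma 3.3: for `p ∈ (1/2,1)` there is `C > 0` depending only on `p` such that for
all `x, y > 0`, with `z = (x^p - y^p)(y^(p-1) - x^(p-1))`,
`|x^(p-1/2) - y^(p-1/2)| * |x - y| ≤ C * max(x^(1/2) y^(1-p), y^(1/2) x^(1-p)) * z`. -/
theorem stmt_2 (p : ℝ) (hp : p ∈ Set.Ioo (1 / 2 : ℝ) 1) :
    ∃ C : ℝ, 0 < C ∧ ∀ x y : ℝ, 0 < x → 0 < y →
      |x ^ (p - 1 / 2) - y ^ (p - 1 / 2)| * |x - y| ≤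
        C * max (x ^ (1 / 2 : ℝ) * y ^ (1 - p)) (y ^ (1 / 2 : ℝ) * x ^ (1 - p)) *
          ((x ^ p - y ^ p) * (y ^ (p - 1) - x ^ (p - 1))) := by
  obtain ⟨hp1, hp2⟩ := hp
  refine ⟨1 / (1 - p), div_pos one_pos (by linarith), fun x y hx hy => ?_⟩
  have hznn : ∀ a b : ℝ, 0 < a → 0 < b → b ≤ a →
      0 ≤ (a ^ p - b ^ p) * (b ^ (p - 1) - a ^ (p - 1)) := fun a b ha hb hba =>
    mul_nonneg (by have := Real.rpow_le_rpow hb.le hba (by linarith : (0:ℝ) ≤ p); linarith)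
      (by have := Real.rpow_le_rpow_of_nonpos hb hba (by linarith : p - 1 ≤ 0); linarith)
  rcases le_total y x with hxy | hxy
  · have hz := hznn x y hx hy hxy
    have habs1 : |x ^ (p - 1 / 2) - y ^ (p - 1 / 2)| = x ^ (p - 1 / 2) - y ^ (p - 1 / 2) := by
      rw [abs_of_nonneg]
      have := Real.rpow_le_rpow hy.le hxy (by linarith : (0:ℝ) ≤ p - 1/2); linarith
    have habs2 : |x - y| = x - y := abs_of_nonneg (by linarith)
    rw [habs1, habs2]
    refine (key_lemma hp1 hp2 hx hy hxy).trans ?_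
    apply mul_le_mul_of_nonneg_right _ hz
    exact mul_le_mul_of_nonneg_left (le_max_left _ _) (le_of_lt (div_pos one_pos (by linarith)))
  · have hz := hznn y x hy hx hxy
    have hzeq : (x ^ p - y ^ p) * (y ^ (p - 1) - x ^ (p - 1)) =
        (y ^ p - x ^ p) * (x ^ (p - 1) - y ^ (p - 1)) := by ring
    have habs1 : |x ^ (p - 1 / 2) - y ^ (p - 1 / 2)| = y ^ (p - 1 / 2) - x ^ (p - 1 / 2) := by
      rw [abs_sub_comm, abs_of_nonneg]
      have := Real.rpow_le_rpow hx.le hxy (by linarith : (0:ℝ) ≤ p - 1/2); linarith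
    have habs2 : |x - y| = y - x := by rw [abs_sub_comm]; exact abs_of_nonneg (by linarith)
    rw [habs1, habs2, hzeq]
    refine (key_lemma hp1 hp2 hy hx hxy).trans ?_
    apply mul_le_mul_of_nonneg_right _ hz
    exact mul_le_mul_of_nonneg_left (le_max_right _ _) (le_of_lt (div_pos one_pos (by linarith)))
end

section
/- For every p in the open interval (1/2, 1), the function w ↦ (1 - w^{p-1/2})(1 - w) / ((1 - w^p)(1 - w^{1-p})) is bounded above on the interval (0, 1); that is, its supremum over w ∈ (0,1) is finite. -/
/-- Bernoulli's inequality for `w ^ s` with `s ∈ [0, 1]`, rearranged. -/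
lemma mul_one_sub_le_one_sub_rpow {w s : ℝ} (hw : 0 ≤ w) (hs0 : 0 ≤ s) (hs1 : s ≤ 1) :
    s * (1 - w) ≤ 1 - w ^ s := by
  have h := rpow_one_add_le_one_add_mul_self (s := w - 1) (by linarith) hs0 hs1
  rw [add_sub_cancel] at h
  linarith

/-- For `0 < w < 1`, the factor `1 - w ^ q` in the numerator is dominated by `1 - w ^ r` in the
denominator, and the factor `1 - w` by `(1 - w ^ s) / s`. -/
lemma one_sub_rpow_mul_one_sub_div_le_inv {w q r s : ℝ} (hw0 : 0 < w) (hw1 : w < 1)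
    (hqr : q ≤ r) (hr : 0 < r) (hs0 : 0 < s) (hs1 : s ≤ 1) :
    (1 - w ^ q) * (1 - w) / ((1 - w ^ r) * (1 - w ^ s)) ≤ s⁻¹ := by
  have hwr : 0 < 1 - w ^ r := sub_pos.2 (Real.rpow_lt_one hw0.le hw1 hr)
  have hws : 0 < 1 - w ^ s := sub_pos.2 (Real.rpow_lt_one hw0.le hw1 hs0)
  have hnum : 1 - w ^ q ≤ 1 - w ^ r :=
    sub_le_sub_left (Real.rpow_le_rpow_of_exponent_ge hw0 hw1.le hqr) 1
  have hden : s * (1 - w) ≤ 1 - w ^ s := mul_one_sub_le_one_sub_rpow hw0.le hs0.le hs1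
  rw [div_le_iff₀ (mul_pos hwr hws), inv_mul_eq_div, le_div_iff₀ hs0]
  calc (1 - w ^ q) * (1 - w) * s ≤ (1 - w ^ r) * (s * (1 - w)) := by
        rw [mul_comm s, ← mul_assoc]
        exact mul_le_mul_of_nonneg_right (mul_le_mul_of_nonneg_right hnum (by linarith)) hs0.le
    _ ≤ (1 - w ^ r) * (1 - w ^ s) := mul_le_mul_of_nonneg_left hden hwr.le

/-- The function `w ↦ (1 - w^(p-1/2))(1 - w) / ((1 - w^p)(1 - w^(1-p)))` is bounded
above on `(0,1)` for every `p ∈ (1/2,1)`. -/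
theorem stmt_3 (p : ℝ) (hp : p ∈ Set.Ioo (1 / 2 : ℝ) 1) :
    BddAbove ((fun w : ℝ =>
        (1 - w ^ (p - 1 / 2)) * (1 - w) /
          ((1 - w ^ p) * (1 - w ^ (1 - p)))) '' Set.Ioo (0 : ℝ) 1) := by
  obtain ⟨hp1, hp2⟩ := hp
  refine ⟨(1 - p)⁻¹, ?_⟩
  rintro _ ⟨w, ⟨hw0, hw1⟩, rfl⟩
  exact one_sub_rpow_mul_one_sub_div_le_inv hw0 hw1 (by linarith) (by linarith) (by linarith)
    (by linarith)
end

section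
/- For every p in the open interval (1/2, 1) there exists a constant C > 0, depending only on p, such that for all real numbers x and y with 0 < y ≤ x, one has y^{p-1}(x - y) ≤ C · x · (y^{p-1} - x^{p-1}). -/
private lemma hasDerivAt_f (p y t : ℝ) (ht0 : 0 < t) :
    HasDerivAt (fun t => t * y ^ (p - 1) - t ^ p - (1 - p) * y ^ (p - 1) * (t - y))
      (y ^ (p - 1) - p * t ^ (p - 1) - (1 - p) * y ^ (p - 1)) t := by
  have h1 : HasDerivAt (fun t : ℝ => t * y ^ (p - 1)) (y ^ (p - 1)) t := by
    simpa using (hasDerivAt_id t).mul_const (y ^ (p - 1))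
  have h2 : HasDerivAt (fun t : ℝ => t ^ p) (p * t ^ (p - 1)) t :=
    Real.hasDerivAt_rpow_const (Or.inl ht0.ne')
  have h3 : HasDerivAt (fun t : ℝ => (1 - p) * y ^ (p - 1) * (t - y))
      ((1 - p) * y ^ (p - 1)) t := by
    simpa using ((hasDerivAt_id t).sub_const y).const_mul ((1 - p) * y ^ (p - 1))
  exact (h1.sub h2).sub h3

/-- From the proof of Lemma 3.1: for `p ∈ (1/2,1)` there is `C > 0` depending only on
`p` such that for `0 < y ≤ x`, `y^(p-1)(x - y) ≤ C x (y^(p-1) - x^(p-1))`. -/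
theorem stmt_7 (p : ℝ) (hp : p ∈ Set.Ioo (1 / 2 : ℝ) 1) :
    ∃ C : ℝ, 0 < C ∧ ∀ x y : ℝ, 0 < y → y ≤ x →
      y ^ (p - 1) * (x - y) ≤ C * x * (y ^ (p - 1) - x ^ (p - 1)) := by
  obtain ⟨hp1, hp2⟩ := hp
  have h1p : (0:ℝ) < 1 - p := by linarith
  refine ⟨(1 - p)⁻¹, by positivity, ?_⟩
  intro x y hy hyx
  have hx : 0 < x := lt_of_lt_of_le hy hyx
  set f : ℝ → ℝ := fun t => t * y ^ (p - 1) - t ^ p - (1 - p) * y ^ (p - 1) * (t - y)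
    with hf
  have key : f y ≤ f x := by
    have hmono : MonotoneOn f (Set.Icc y x) := by
      apply monotoneOn_of_deriv_nonneg (convex_Icc y x)
      · apply ContinuousOn.sub (ContinuousOn.sub ?_ ?_) ?_
        · exact (continuous_id.mul continuous_const).continuousOn
        · intro t ht
          exact (Real.continuousAt_rpow_const t p
            (Or.inl (ne_of_gt (lt_of_lt_of_le hy ht.1)))).continuousWithinAt
        · fun_prop
      · intro t ht
        rw [interior_Icc] at ht
        have ht0 : 0 < t := lt_of_lt_of_le hy ht.1.le
        exact (hasDerivAt_f p y t ht0).differentiableAt.differentiableWithinAt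
      · intro t ht
        rw [interior_Icc] at ht
        have ht0 : 0 < t := lt_of_lt_of_le hy ht.1.le
        rw [(hasDerivAt_f p y t ht0).deriv]
        have hle : t ^ (p - 1) ≤ y ^ (p - 1) :=
          Real.rpow_le_rpow_of_nonpos hy ht.1.le (by linarith)
        nlinarith [Real.rpow_pos_of_pos hy (p - 1)]
    exact hmono (Set.left_mem_Icc.mpr hyx) (Set.right_mem_Icc.mpr hyx) hyx
  have hyy : y * y ^ (p - 1) = y ^ p := by
    nth_rewrite 1 [← Real.rpow_one y]
    rw [← Real.rpow_add hy]; ring_nf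
  have hxx : x * x ^ (p - 1) = x ^ p := by
    nth_rewrite 1 [← Real.rpow_one x]
    rw [← Real.rpow_add hx]; ring_nf
  have hfy : f y = 0 := by simp [hf, hyy]
  rw [hfy] at key
  have h2 : (1 - p) * (y ^ (p - 1) * (x - y)) ≤ x * (y ^ (p - 1) - x ^ (p - 1)) := by
    have : x * (y ^ (p - 1) - x ^ (p - 1)) = x * y ^ (p - 1) - x ^ p := by
      rw [mul_sub, hxx]
    rw [this]
    simp only [hf] at key
    linarith
  rw [mul_assoc]
  exact (le_inv_mul_iff₀ h1p).mpr h2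
end

section
/- For every p in the open interval (1/2, 1) there exists a constant C > 0, depending only on p, such that for all real numbers x and y with 0 < y < x, one has (x - y)^2 ≤ C · (x^{2p} - y^{2p})(x^{2-2p} - y^{2-2p}). -/
/-! Both factors are bounded below by a power of `x` times `x - y`:
`x^r - y^r ≥ x^(r-1) (x - y)` for `r ≥ 1` (monotonicity of `t ↦ t^(r-1)`), and
`x^s - y^s ≥ s x^(s-1) (x - y)` for `0 ≤ s ≤ 1` (Bernoulli, i.e. concavity of `t ↦ t^s`).
For `r = 2p` and `s = 2 - 2p` the powers of `x` cancel, so `C = 1 / (2 - 2p)` works. -/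

namespace Real

lemma rpow_sub_one_mul_sub_le_rpow_sub_rpow {x y r : ℝ} (hy : 0 ≤ y) (hyx : y ≤ x)
    (hr : 1 ≤ r) : x ^ (r - 1) * (x - y) ≤ x ^ r - y ^ r := by
  have hx : 0 ≤ x := hy.trans hyx
  have hr0 : r - 1 + 1 ≠ 0 := by linarith
  have hxr : x ^ r = x ^ (r - 1) * x := by
    rw [← rpow_add_one' hx hr0, sub_add_cancel]
  have hyr : y ^ r = y ^ (r - 1) * y := by
    rw [← rpow_add_one' hy hr0, sub_add_cancel]
  have hmono : y ^ (r - 1) ≤ x ^ (r - 1) := rpow_le_rpow hy hyx (by linarith)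
  rw [hxr, hyr]
  nlinarith

lemma mul_rpow_sub_one_mul_sub_le_rpow_sub_rpow {x y s : ℝ} (hx : 0 < x) (hy : 0 ≤ y)
    (hs0 : 0 ≤ s) (hs1 : s ≤ 1) : s * x ^ (s - 1) * (x - y) ≤ x ^ s - y ^ s := by
  have hbern : (y / x) ^ s ≤ 1 + s * (y / x - 1) := by
    simpa using rpow_one_add_le_one_add_mul_self (s := y / x - 1)
      (by linarith [div_nonneg hy hx.le]) hs0 hs1
  rw [div_rpow hy hx.le, div_le_iff₀ (rpow_pos_of_pos hx s)] at hbern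
  have hxs : x ^ s = x ^ (s - 1) * x := by
    rw [← rpow_add_one hx.ne', sub_add_cancel]
  have hxy : x * (y / x) = y := by field_simp
  calc s * x ^ (s - 1) * (x - y) = x ^ s - x ^ s * (1 + s * (y / x - 1)) := by
        rw [hxs]; linear_combination (s * x ^ (s - 1)) * hxy
    _ ≤ x ^ s - y ^ s := by linarith

lemma mul_sq_sub_le_rpow_sub_rpow_mul_rpow_sub_rpow {x y r s : ℝ} (hy : 0 ≤ y)
    (hyx : y < x) (hr : 1 ≤ r) (hs0 : 0 ≤ s) (hs1 : s ≤ 1) (hrs : r + s = 2) :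
    s * (x - y) ^ 2 ≤ (x ^ r - y ^ r) * (x ^ s - y ^ s) := by
  have hx : 0 < x := hy.trans_lt hyx
  have hcancel : x ^ (r - 1) * x ^ (s - 1) = 1 := by
    rw [← rpow_add hx, show r - 1 + (s - 1) = 0 by linarith, rpow_zero]
  calc s * (x - y) ^ 2 = (x ^ (r - 1) * (x - y)) * (s * x ^ (s - 1) * (x - y)) := by
        linear_combination (-s * (x - y) ^ 2) * hcancel
    _ ≤ (x ^ r - y ^ r) * (x ^ s - y ^ s) := by
        refine mul_le_mul (rpow_sub_one_mul_sub_le_rpow_sub_rpow hy hyx.le hr)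
          (mul_rpow_sub_one_mul_sub_le_rpow_sub_rpow hx hy hs0 hs1) ?_ ?_
        · exact mul_nonneg (mul_nonneg hs0 (rpow_nonneg hx.le _)) (by linarith)
        · exact (mul_nonneg (rpow_nonneg hx.le _) (by linarith)).trans
            (rpow_sub_one_mul_sub_le_rpow_sub_rpow hy hyx.le hr)

end Real

/-- From the proof of Lemma 3.6: for `p ∈ (1/2,1)` there is `C > 0` depending only on
`p` such that for `0 < y < x`, `(x - y)^2 ≤ C (x^(2p) - y^(2p))(x^(2-2p) - y^(2-2p))`. -/
theorem stmt_8 (p : ℝ) (hp : p ∈ Set.Ioo (1 / 2 : ℝ) 1) :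
    ∃ C : ℝ, 0 < C ∧ ∀ x y : ℝ, 0 < y → y < x →
      (x - y) ^ 2 ≤
        C * ((x ^ (2 * p) - y ^ (2 * p)) * (x ^ (2 - 2 * p) - y ^ (2 - 2 * p))) := by
  obtain ⟨hp1, hp2⟩ := hp
  have hs : 0 < 2 - 2 * p := by linarith
  refine ⟨(2 - 2 * p)⁻¹, inv_pos.mpr hs, fun x y hy hyx => ?_⟩
  rw [← mul_le_mul_iff_right₀ hs, ← mul_assoc, mul_inv_cancel₀ hs.ne', one_mul]
  exact Real.mul_sq_sub_le_rpow_sub_rpow_mul_rpow_sub_rpow hy.le hyx (by linarith)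
    hs.le (by linarith) (by ring)
end

section
/- For every p in the open interval (1/2, 1), the function w ↦ (1 - w)^2 / ((1 - w^{2p})(1 - w^{2-2p})) is bounded above on the interval (0, 1); that is, its supremum over w ∈ (0,1) is finite. -/
/-- The function `w ↦ (1 - w)^2 / ((1 - w^(2p))(1 - w^(2-2p)))` is bounded above on
`(0,1)` for every `p ∈ (1/2,1)`. -/
theorem stmt_9 (p : ℝ) (hp : p ∈ Set.Ioo (1 / 2 : ℝ) 1) :
    BddAbove ((fun w : ℝ =>
        (1 - w) ^ 2 / ((1 - w ^ (2 * p)) * (1 - w ^ (2 - 2 * p)))) ''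
      Set.Ioo (0 : ℝ) 1) := by
  obtain ⟨hp1, hp2⟩ := hp
  refine ⟨1 / (2 - 2 * p), ?_⟩
  rintro y ⟨w, ⟨hw0, hw1⟩, rfl⟩
  simp only
  have hr : (0:ℝ) < 2 - 2 * p := by linarith
  have h1 : w ^ (2 * p) ≤ w := by
    have := Real.rpow_le_rpow_of_exponent_ge hw0 hw1.le (by linarith : (1:ℝ) ≤ 2 * p)
    simpa using this
  have hA : 1 - w ≤ 1 - w ^ (2 * p) := by linarith
  have h2 : w ^ (2 - 2 * p) ≤ 1 + (2 - 2 * p) * (w - 1) := by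
    have := rpow_one_add_le_one_add_mul_self (s := w - 1) (by linarith)
      (p := 2 - 2 * p) (by linarith) (by linarith)
    simpa using this
  have hB : (2 - 2 * p) * (1 - w) ≤ 1 - w ^ (2 - 2 * p) := by nlinarith
  have hwpos : (0:ℝ) < 1 - w := by linarith
  have hApos : (0:ℝ) < 1 - w ^ (2 * p) := lt_of_lt_of_le hwpos hA
  have hBpos : (0:ℝ) < 1 - w ^ (2 - 2 * p) := lt_of_lt_of_le (by positivity) hB
  rw [div_le_div_iff₀ (by positivity) hr]
  calc (1 - w) ^ 2 * (2 - 2 * p)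
      = ((2 - 2 * p) * (1 - w)) * (1 - w) := by ring
    _ ≤ (1 - w ^ (2 - 2 * p)) * (1 - w ^ (2 * p)) := by
        apply mul_le_mul hB hA hwpos.le hBpos.le
    _ = 1 * ((1 - w ^ (2 * p)) * (1 - w ^ (2 - 2 * p))) := by ring
end

section
/- For every q in the open interval (1, 2), the function f₂(z) = -(q+1)(2-q)z^q - q(q-1)z^{q-1} + q(3-q)z - (q-1)(2-q) satisfies f₂(z) ≤ 0 for all z in the closed interval [0, 1]. -/
/-- Inequality (A.3): for `q ∈ (1,2)`,
`f₂(z) = -(q+1)(2-q)z^q - q(q-1)z^(q-1) + q(3-q)z - (q-1)(2-q) ≤ 0` on `[0,1]`. -/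
theorem stmt_12 (q : ℝ) (hq : q ∈ Set.Ioo (1 : ℝ) 2) (z : ℝ)
    (hz : z ∈ Set.Icc (0 : ℝ) 1) :
    -(q + 1) * (2 - q) * z ^ q - q * (q - 1) * z ^ (q - 1) + q * (3 - q) * z -
        (q - 1) * (2 - q) ≤ 0 := by
  obtain ⟨hq1, hq2⟩ := hq
  obtain ⟨hz0, _⟩ := hz
  set s : ℝ := q * (3 - q) with hsdef
  have hs0 : (0:ℝ) < s := by nlinarith
  have ha : (0:ℝ) ≤ (q + 1) * (2 - q) / s := by
    apply div_nonneg _ hs0.le; nlinarith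
  have hb : (0:ℝ) ≤ q * (q - 1) / s := by
    apply div_nonneg _ hs0.le; nlinarith
  have hc : (0:ℝ) ≤ (q - 1) * (2 - q) / s := by
    apply div_nonneg _ hs0.le; nlinarith
  have hw : (q + 1) * (2 - q) / s + q * (q - 1) / s + (q - 1) * (2 - q) / s = 1 := by
    field_simp
    ring
  have key := Real.geom_mean_le_arith_mean3_weighted ha hb hc
      (Real.rpow_nonneg hz0 q) (Real.rpow_nonneg hz0 (q - 1)) zero_le_one hw
  have hgeom : (z ^ q) ^ ((q + 1) * (2 - q) / s) * (z ^ (q - 1)) ^ (q * (q - 1) / s)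
      * (1:ℝ) ^ ((q - 1) * (2 - q) / s) = z := by
    rw [Real.one_rpow, mul_one, ← Real.rpow_mul hz0, ← Real.rpow_mul hz0,
      ← Real.rpow_add' hz0]
    · rw [show q * ((q + 1) * (2 - q) / s) + (q - 1) * (q * (q - 1) / s) = 1 by
        field_simp; ring, Real.rpow_one]
    · rw [show q * ((q + 1) * (2 - q) / s) + (q - 1) * (q * (q - 1) / s) = 1 by
        field_simp; ring]
      norm_num
  rw [hgeom] at key
  have key2 : s * z ≤ (q + 1) * (2 - q) * z ^ q + q * (q - 1) * z ^ (q - 1)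
      + (q - 1) * (2 - q) := by
    have := mul_le_mul_of_nonneg_left key hs0.le
    calc s * z ≤ s * ((q + 1) * (2 - q) / s * z ^ q + q * (q - 1) / s * z ^ (q - 1)
        + (q - 1) * (2 - q) / s * 1) := this
      _ = (q + 1) * (2 - q) * z ^ q + q * (q - 1) * z ^ (q - 1) + (q - 1) * (2 - q) := by
        field_simp
  nlinarith [key2]
end

section
/- For every q in the open interval (1, 2), the function f₃(z) = -(q+1)(2-q)z^2 - 2q(q-1)z + q(q-1) + 2q z^{3-q} - 2(q-1)z^{2-q} satisfies f₃(z) ≥ 0 for all z in the closed interval [0, 1]. -/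
open Real Set

/-- Weighted AM-GM: `z ^ p ≤ p * z + (1 - p)` for `p ∈ [0,1]`, `z ≥ 0`. -/
lemma bern1 {p z : ℝ} (hp0 : 0 ≤ p) (hp1 : p ≤ 1) (hz : 0 ≤ z) :
    z ^ p ≤ p * z + (1 - p) := by
  have h := Real.geom_mean_le_arith_mean2_weighted hp0 (by linarith : (0:ℝ) ≤ 1 - p)
    hz zero_le_one (by ring)
  simpa using h

/-- Second-order Bernoulli, convex case: for `a ∈ (1,2)` and `z ∈ [0,1]`,
`1 + a(z-1) + a(a-1)/2 (z-1)² ≤ z^a`. -/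
lemma taylor_lower {a z : ℝ} (ha1 : 1 < a) (ha2 : a < 2) (hz0 : 0 ≤ z) (hz1 : z ≤ 1) :
    1 + a * (z - 1) + a * (a - 1) / 2 * (z - 1) ^ 2 ≤ z ^ a := by
  set g : ℝ → ℝ := fun x => x ^ a - (1 + a * (x - 1) + a * (a - 1) / 2 * (x - 1) ^ 2) with hg
  have hderiv : ∀ x : ℝ, HasDerivAt g (a * x ^ (a - 1) - (a + a * (a - 1) * (x - 1))) x := by
    intro x
    have h1 : HasDerivAt (fun x : ℝ => x ^ a) (a * x ^ (a - 1)) x := by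
      have := Real.hasDerivAt_rpow_const (x := x) (p := a) (Or.inr ha1.le)
      simpa [mul_comm] using this
    have h2 : HasDerivAt (fun x : ℝ => 1 + a * (x - 1) + a * (a - 1) / 2 * (x - 1) ^ 2)
        (a + a * (a - 1) * (x - 1)) x := by
      have : HasDerivAt (fun x : ℝ => 1 + a * (x - 1) + a * (a - 1) / 2 * (x - 1) ^ 2)
          (0 + a * 1 + a * (a - 1) / 2 * (2 * (x - 1) ^ 1 * 1)) x := by
        exact (((hasDerivAt_const x (1:ℝ)).add
          ((((hasDerivAt_id x).sub_const 1).const_mul a))).add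
          ((((hasDerivAt_id x).sub_const 1).pow 2).const_mul (a * (a - 1) / 2)))
      convert this using 1
      ring
    exact h1.sub h2
  have hanti : AntitoneOn g (Icc 0 1) := by
    apply antitoneOn_of_deriv_nonpos (convex_Icc 0 1)
    · exact fun x _ => ((hderiv x).differentiableAt.continuousAt).continuousWithinAt
    · intro x hx
      exact (hderiv x).differentiableAt.differentiableWithinAt
    · intro x hx
      rw [interior_Icc] at hx
      rw [(hderiv x).deriv]
      have hb : x ^ (a - 1) ≤ (a - 1) * x + (1 - (a - 1)) :=
        bern1 (by linarith) (by linarith) hx.1.le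
      nlinarith [hx.1.le, hx.2.le]
  have h1 : g 1 ≤ g z := hanti ⟨hz0, hz1⟩ ⟨by norm_num, le_refl 1⟩ hz1
  have : g 1 = 0 := by simp [hg]
  have hgz : 0 ≤ g z := this ▸ h1
  simpa [hg] using hgz

/-- Second-order Bernoulli, concave case: for `b ∈ (0,1)` and `z ∈ [0,1]`,
`z^b ≤ 1 + b(z-1) + b(b-1)/2 (z-1)²`. -/
lemma taylor_upper {b z : ℝ} (hb0 : 0 < b) (hb1 : b < 1) (hz0 : 0 ≤ z) (hz1 : z ≤ 1) :
    z ^ b ≤ 1 + b * (z - 1) + b * (b - 1) / 2 * (z - 1) ^ 2 := by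
  set h : ℝ → ℝ := fun x => (1 + b * (x - 1) + b * (b - 1) / 2 * (x - 1) ^ 2) - x ^ b with hh
  have hderiv : ∀ x : ℝ, x ≠ 0 →
      HasDerivAt h ((b + b * (b - 1) * (x - 1)) - b * x ^ (b - 1)) x := by
    intro x hx
    have h1 : HasDerivAt (fun x : ℝ => x ^ b) (b * x ^ (b - 1)) x := by
      have := Real.hasDerivAt_rpow_const (x := x) (p := b) (Or.inl hx)
      simpa [mul_comm] using this
    have h2 : HasDerivAt (fun x : ℝ => 1 + b * (x - 1) + b * (b - 1) / 2 * (x - 1) ^ 2)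
        (b + b * (b - 1) * (x - 1)) x := by
      have : HasDerivAt (fun x : ℝ => 1 + b * (x - 1) + b * (b - 1) / 2 * (x - 1) ^ 2)
          (0 + b * 1 + b * (b - 1) / 2 * (2 * (x - 1) ^ 1 * 1)) x := by
        exact (((hasDerivAt_const x (1:ℝ)).add
          ((((hasDerivAt_id x).sub_const 1).const_mul b))).add
          ((((hasDerivAt_id x).sub_const 1).pow 2).const_mul (b * (b - 1) / 2)))
      convert this using 1
      ring
    exact h2.sub h1
  have hanti : AntitoneOn h (Icc 0 1) := by
    apply antitoneOn_of_deriv_nonpos (convex_Icc 0 1)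
    · intro x hx
      apply ContinuousWithinAt.sub
      · exact (Continuous.continuousWithinAt (by continuity))
      · exact (Real.continuousAt_rpow_const x b (Or.inr hb0.le)).continuousWithinAt
    · intro x hx
      rw [interior_Icc] at hx
      exact (hderiv x (ne_of_gt hx.1)).differentiableAt.differentiableWithinAt
    · intro x hx
      rw [interior_Icc] at hx
      rw [(hderiv x (ne_of_gt hx.1)).deriv]
      -- need: 1 + (b-1)(x-1) ≤ x^(b-1)
      have key : 1 + (b - 1) * (x - 1) ≤ x ^ (b - 1) := by
        have hxpow : x ^ (1 - b) ≤ (1 - b) * x + (1 - (1 - b)) :=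
          bern1 (by linarith) (by linarith) hx.1.le
        have hpos : 0 < x ^ (1 - b) := Real.rpow_pos_of_pos hx.1 _
        have hinv : x ^ (b - 1) = (x ^ (1 - b))⁻¹ := by
          rw [← Real.rpow_neg hx.1.le]; norm_num
        rw [hinv, ← one_div, le_div_iff₀ hpos]
        nlinarith [mul_le_mul_of_nonneg_left hxpow
          (show (0:ℝ) ≤ 1 + (1 - b) * (1 - x) by nlinarith [hx.1.le, hx.2.le]),
          sq_nonneg ((1 - b) * (1 - x))]
      nlinarith [hb0.le]
  have h1 : h 1 ≤ h z := hanti ⟨hz0, hz1⟩ ⟨by norm_num, le_refl 1⟩ hz1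
  have : h 1 = 0 := by simp [hh]
  have hhz : 0 ≤ h z := this ▸ h1
  simpa [hh] using hhz

/-- Inequality (A.4): for `q ∈ (1,2)`,
`f₃(z) = -(q+1)(2-q)z² - 2q(q-1)z + q(q-1) + 2q z^(3-q) - 2(q-1)z^(2-q) ≥ 0` on `[0,1]`. -/
theorem stmt_13 (q : ℝ) (hq : q ∈ Set.Ioo (1 : ℝ) 2) (z : ℝ)
    (hz : z ∈ Set.Icc (0 : ℝ) 1) :
    0 ≤ -(q + 1) * (2 - q) * z ^ 2 - 2 * q * (q - 1) * z + q * (q - 1) +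
        2 * q * z ^ (3 - q) - 2 * (q - 1) * z ^ (2 - q) := by
  obtain ⟨hq1, hq2⟩ := hq
  obtain ⟨hz0, hz1⟩ := hz
  have hA := taylor_lower (a := 3 - q) (by linarith) (by linarith) hz0 hz1
  have hB := taylor_upper (b := 2 - q) (by linarith) (by linarith) hz0 hz1
  nlinarith [mul_le_mul_of_nonneg_left hA (by linarith : (0:ℝ) ≤ 2 * q),
    mul_le_mul_of_nonneg_left hB (by linarith : (0:ℝ) ≤ 2 * (q - 1))]
end

section
/- For every q in the open interval (1, 2), the function f₄(z) = -(2-q)z^{q+1} - 2(q-1)z^q + q z^{q-1} + q z^2 - 2(q-1)z - (2-q) satisfies f₄(z) ≤ 0 for all z in the closed interval [0, 1]. -/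
/-- weighted AM-GM step: `(2-q) t^(q-1) + (q-1) t^(q-2) ≥ 1` for `t ∈ (0,1]`, `q ∈ (1,2)`. -/
lemma amgm_aux {q t : ℝ} (hq1 : 1 < q) (hq2 : q < 2) (ht : 0 < t) :
    1 ≤ (2 - q) * t ^ (q - 1) + (q - 1) * t ^ (q - 2) := by
  have h := Real.geom_mean_le_arith_mean2_weighted (w₁ := 2 - q) (w₂ := q - 1)
    (p₁ := t ^ (q - 1)) (p₂ := t ^ (q - 2)) (by linarith) (by linarith)
    (Real.rpow_nonneg ht.le _) (Real.rpow_nonneg ht.le _) (by ring)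
  calc (1 : ℝ) = (t ^ (q - 1)) ^ (2 - q) * (t ^ (q - 2)) ^ (q - 1) := by
        rw [← Real.rpow_mul ht.le, ← Real.rpow_mul ht.le, ← Real.rpow_add ht,
          show (q - 1) * (2 - q) + (q - 2) * (q - 1) = 0 by ring, Real.rpow_zero]
    _ ≤ (2 - q) * t ^ (q - 1) + (q - 1) * t ^ (q - 2) := h

/-- the auxiliary function `h` is nonneg on `(0,1]`. -/
lemma h_aux_nonneg {q z : ℝ} (hq1 : 1 < q) (hq2 : q < 2) (hz0 : 0 < z) (hz1 : z ≤ 1) :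
    0 ≤ q * z + (2 - q) - ((2 - q) * z ^ q + q * z ^ (q - 1)) := by
  set h : ℝ → ℝ := fun t => q * t + (2 - q) - ((2 - q) * t ^ q + q * t ^ (q - 1)) with hh
  have h1 : h 1 = 0 := by simp [hh, Real.one_rpow]
  have key : ∀ t : ℝ, 0 < t →
      HasDerivAt h (q - ((2 - q) * (q * t ^ (q - 1)) + q * ((q - 1) * t ^ (q - 2)))) t := by
    intro t ht
    have d1 : HasDerivAt (fun x : ℝ => x ^ q) (q * t ^ (q - 1)) t :=
      Real.hasDerivAt_rpow_const (Or.inl ht.ne')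
    have d2 : HasDerivAt (fun x : ℝ => x ^ (q - 1)) ((q - 1) * t ^ (q - 1 - 1)) t :=
      Real.hasDerivAt_rpow_const (Or.inl ht.ne')
    have : HasDerivAt h (q * 1 - ((2 - q) * (q * t ^ (q - 1)) + q * ((q - 1) * t ^ (q - 1 - 1)))) t :=
      (((hasDerivAt_id t).const_mul q).add_const (2 - q)).sub
        ((d1.const_mul (2 - q)).add (d2.const_mul q))
    have e : q - 1 - 1 = q - 2 := by ring
    rw [e] at this
    simpa using this
  rcases eq_or_lt_of_le hz1 with rfl | hz1'
  · rw [← h1]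
  have anti : AntitoneOn h (Set.Icc z 1) := by
    apply antitoneOn_of_deriv_nonpos (convex_Icc z 1)
    · intro x hx
      exact ((key x (lt_of_lt_of_le hz0 hx.1)).continuousAt).continuousWithinAt
    · intro x hx
      rw [interior_Icc] at hx
      exact (key x (lt_trans hz0 hx.1)).differentiableAt.differentiableWithinAt
    · intro x hx
      rw [interior_Icc] at hx
      have hx0 : 0 < x := lt_trans hz0 hx.1
      rw [(key x hx0).deriv]
      have hg := amgm_aux hq1 hq2 hx0
      nlinarith [hg, hq1, hq2]
  have := anti (Set.mem_Icc.2 ⟨le_refl z, hz1⟩) (Set.mem_Icc.2 ⟨hz1, le_refl 1⟩) hz1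
  rw [h1] at this
  exact this

/-- Inequality (A.5): for `q ∈ (1,2)`,
`f₄(z) = -(2-q)z^(q+1) - 2(q-1)z^q + q z^(q-1) + q z² - 2(q-1)z - (2-q) ≤ 0` on `[0,1]`. -/
theorem stmt_14 (q : ℝ) (hq : q ∈ Set.Ioo (1 : ℝ) 2) (z : ℝ)
    (hz : z ∈ Set.Icc (0 : ℝ) 1) :
    -(2 - q) * z ^ (q + 1) - 2 * (q - 1) * z ^ q + q * z ^ (q - 1) + q * z ^ 2 -
        2 * (q - 1) * z - (2 - q) ≤ 0 := by
  obtain ⟨hq1, hq2⟩ := hq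
  obtain ⟨hz0, hz1⟩ := hz
  rcases eq_or_lt_of_le hz0 with rfl | hz0'
  · rw [Real.zero_rpow (by linarith), Real.zero_rpow (by linarith),
      Real.zero_rpow (by linarith)]
    norm_num
    linarith
  · have e1 : z ^ (q + 1) = z ^ q * z := Real.rpow_add_one hz0'.ne' q
    have e2 : z ^ q = z ^ (q - 1) * z := by
      rw [← Real.rpow_add_one hz0'.ne' (q - 1)]; ring_nf
    have hh := h_aux_nonneg hq1 hq2 hz0' hz1
    have hid : -(2 - q) * z ^ (q + 1) - 2 * (q - 1) * z ^ q + q * z ^ (q - 1) + q * z ^ 2 -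
        2 * (q - 1) * z - (2 - q)
        = -((1 - z) * (q * z + (2 - q) - ((2 - q) * z ^ q + q * z ^ (q - 1)))) := by
      rw [e1, e2]; ring
    rw [hid]
    have : 0 ≤ (1 - z) * (q * z + (2 - q) - ((2 - q) * z ^ q + q * z ^ (q - 1))) :=
      mul_nonneg (by linarith) hh
    linarith
end

section
/- For every q in the open interval (1, 2), the function f(z) = (1 - z^q)(1 - z^{2-q}) / (z^{2-q}(1 - z^{q-1})^2) is monotone decreasing on the open interval (0, 1): for all z₁, z₂ with 0 < z₁ < z₂ < 1, one has f(z₂) ≤ f(z₁). -/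
/-!
Put `c = q - 1 ∈ (0, 1)` and `z = e^{-2s}` with `s > 0`. The numerator and the denominator of `f`
add up to `(1 - z)²`, and `1 - z = 2 e^{-s} sinh s`, `1 - z^c = 2 e^{-cs} sinh (cs)`, so
`f(z) = (sinh s / sinh (cs))² - 1`. The quotient `sinh s / sinh (cs)` increases in `s`: its derivative
has the sign of `cosh s sinh (cs) - c sinh s cosh (cs)`, which vanishes at `s = 0` and has derivative
`(1 - c²) sinh s sinh (cs) ≥ 0`. Since `s` decreases as `z` increases, `f` is decreasing.
-/

open Real Set

theorem mul_sinh_mul_cosh_le_cosh_mul_sinh {c s : ℝ} (hc₀ : 0 ≤ c) (hc₁ : c ≤ 1) (hs : 0 ≤ s) :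
    c * sinh s * cosh (c * s) ≤ cosh s * sinh (c * s) := by
  let F : ℝ → ℝ := fun s ↦ cosh s * sinh (c * s) - c * sinh s * cosh (c * s)
  have hF : ∀ s, HasDerivAt F ((1 - c ^ 2) * (sinh s * sinh (c * s))) s := fun s ↦ by
    have hl : HasDerivAt (fun x ↦ c * x) c s := by simpa using (hasDerivAt_id s).const_mul c
    exact (((hasDerivAt_cosh s).mul hl.sinh).sub
      (((hasDerivAt_sinh s).const_mul c).mul hl.cosh)).congr_deriv (by ring)
  have hmono : MonotoneOn F (Ici 0) :=
    monotoneOn_of_hasDerivWithinAt_nonneg (convex_Ici 0)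
      (fun s _ ↦ (hF s).continuousAt.continuousWithinAt)
      (fun s _ ↦ (hF s).hasDerivWithinAt)
      (fun s hs ↦ by
        rw [interior_Ici, mem_Ioi] at hs
        have := sinh_nonneg_iff.mpr hs.le
        have := sinh_nonneg_iff.mpr (mul_nonneg hc₀ hs.le)
        have : 0 ≤ 1 - c ^ 2 := by nlinarith
        positivity)
  simpa [F] using hmono self_mem_Ici hs hs

theorem monotoneOn_sinh_div_sinh_mul {c : ℝ} (hc₀ : 0 < c) (hc₁ : c ≤ 1) :
    MonotoneOn (fun s ↦ sinh s / sinh (c * s)) (Ioi 0) := by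
  have hsinh : ∀ s ∈ Ioi (0 : ℝ), 0 < sinh (c * s) := fun s hs ↦
    sinh_pos_iff.mpr (mul_pos hc₀ hs)
  have hderiv : ∀ s ∈ Ioi (0 : ℝ), HasDerivAt (fun s ↦ sinh s / sinh (c * s))
      ((cosh s * sinh (c * s) - c * sinh s * cosh (c * s)) / sinh (c * s) ^ 2) s := fun s hs ↦ by
    have hl : HasDerivAt (fun x ↦ c * x) c s := by simpa using (hasDerivAt_id s).const_mul c
    exact ((hasDerivAt_sinh s).div hl.sinh (hsinh s hs).ne').congr_deriv (by ring)
  refine monotoneOn_of_hasDerivWithinAt_nonneg (convex_Ioi 0)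
    (fun s hs ↦ (hderiv s hs).continuousAt.continuousWithinAt)
    (fun s hs ↦ (hderiv s (interior_subset hs)).hasDerivWithinAt) (fun s hs ↦ ?_)
  rw [interior_Ioi] at hs
  exact div_nonneg (sub_nonneg.mpr (mul_sinh_mul_cosh_le_cosh_mul_sinh hc₀.le hc₁ hs.le))
    (sq_nonneg _)

theorem exp_rpow_quotient_eq_sinh_div_sinh_sq_sub_one {q s : ℝ} (hqs : (q - 1) * s ≠ 0) :
    (1 - exp (-2 * s) ^ q) * (1 - exp (-2 * s) ^ (2 - q)) /
        (exp (-2 * s) ^ (2 - q) * (1 - exp (-2 * s) ^ (q - 1)) ^ 2) =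
      (sinh s / sinh ((q - 1) * s)) ^ 2 - 1 := by
  have hpow : ∀ r, exp (-2 * s) ^ r = exp (-2 * s * r) := fun r ↦ (exp_mul _ _).symm
  have hzq : exp (-2 * s * q) = ((exp s * exp ((q - 1) * s))⁻¹) ^ 2 := by
    rw [show -2 * s * q = ((2 : ℕ) : ℝ) * -(s + (q - 1) * s) by push_cast; ring, exp_nat_mul,
      exp_neg, exp_add]
  have hz2q : exp (-2 * s * (2 - q)) = ((exp s)⁻¹ * exp ((q - 1) * s)) ^ 2 := by
    rw [show -2 * s * (2 - q) = ((2 : ℕ) : ℝ) * (-s + (q - 1) * s) by push_cast; ring,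
      exp_nat_mul, exp_add, exp_neg]
  have hzq1 : exp (-2 * s * (q - 1)) = (exp ((q - 1) * s))⁻¹ ^ 2 := by
    rw [show -2 * s * (q - 1) = ((2 : ℕ) : ℝ) * -((q - 1) * s) by push_cast; ring, exp_nat_mul,
      exp_neg]
  rw [hpow, hpow, hpow, hzq, hz2q, hzq1, sinh_eq, sinh_eq, exp_neg, exp_neg]
  have hw : exp ((q - 1) * s) ^ 2 - 1 ≠ 0 := by
    rw [sub_ne_zero, ← exp_nat_mul, Ne, exp_eq_one_iff]
    exact mul_ne_zero two_ne_zero hqs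
  field_simp
  ring

/-- Monotonicity in the appendix: for `q ∈ (1,2)`, the function
`f(z) = (1 - z^q)(1 - z^(2-q)) / (z^(2-q)(1 - z^(q-1))^2)` is decreasing on `(0,1)`. -/
theorem stmt_15 (q : ℝ) (hq : q ∈ Set.Ioo (1 : ℝ) 2) (z₁ z₂ : ℝ)
    (h₁ : 0 < z₁) (h₁₂ : z₁ < z₂) (h₂ : z₂ < 1) :
    (1 - z₂ ^ q) * (1 - z₂ ^ (2 - q)) / (z₂ ^ (2 - q) * (1 - z₂ ^ (q - 1)) ^ 2) ≤
      (1 - z₁ ^ q) * (1 - z₁ ^ (2 - q)) / (z₁ ^ (2 - q) * (1 - z₁ ^ (q - 1)) ^ 2) := by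
  obtain ⟨hq₁, hq₂⟩ := hq
  have exists_eq_exp : ∀ z, 0 < z → ∃ s, z = exp (-2 * s) := fun z hz ↦
    ⟨-log z / 2, by rw [show -2 * (-log z / 2) = log z by ring, exp_log hz]⟩
  obtain ⟨s₁, rfl⟩ := exists_eq_exp z₁ h₁
  obtain ⟨s₂, rfl⟩ := exists_eq_exp z₂ (h₁.trans h₁₂)
  have hs₂ : 0 < s₂ := by linarith [exp_lt_one_iff.mp h₂]
  have hs₂₁ : s₂ ≤ s₁ := by linarith [exp_lt_exp.mp h₁₂]
  have hs₁ : 0 < s₁ := hs₂.trans_le hs₂₁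
  have hc : 0 < q - 1 := sub_pos.mpr hq₁
  rw [exp_rpow_quotient_eq_sinh_div_sinh_sq_sub_one (mul_pos hc hs₂).ne',
    exp_rpow_quotient_eq_sinh_div_sinh_sq_sub_one (mul_pos hc hs₁).ne']
  have hratio := monotoneOn_sinh_div_sinh_mul hc (by linarith) hs₂ hs₁ hs₂₁
  have hpos : 0 ≤ sinh s₂ / sinh ((q - 1) * s₂) :=
    div_nonneg (sinh_nonneg_iff.mpr hs₂.le) (sinh_nonneg_iff.mpr (mul_pos hc hs₂).le)
  gcongr
end

section
/- Let n ≥ 2 and let e_n = (0, …, 0, 1) ∈ ℝⁿ. The map Φ sending x to (1 - |x|², x₁/|x|, …, x_{n-1}/|x|) ∈ ℝ × ℝ^{n-1} is injective on the set {x ∈ ℝⁿ : |x| ≤ 1 and |x - e_n| < 1}, where |·| denotes the Euclidean norm. -/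
/-!
Inside the ball `|x - eₙ| < 1` one has `|x|² < 2 xₙ`, so the last coordinate is positive and
`|x| ≠ 0`. The first component of `Φ` fixes `|x|`, which then recovers `x₁, …, x_{n-1}` from
the remaining components; finally `xₙ² = |x|² - (x₁² + ⋯ + x_{n-1}²)` together with `xₙ > 0`
fixes `xₙ`.
-/

open RealInnerProductSpace

theorem norm_sub_lt_norm_iff_sq_lt_inner {F : Type*} [NormedAddCommGroup F]
    [InnerProductSpace ℝ F] (x v : F) : ‖x - v‖ < ‖v‖ ↔ ‖x‖ ^ 2 < 2 * ⟪x, v⟫ := by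
  rw [← sq_lt_sq₀ (norm_nonneg _) (norm_nonneg _), norm_sub_sq_real]
  constructor <;> intro h <;> linarith

namespace EuclideanSpace

variable {ι : Type*} [Fintype ι] [DecidableEq ι]

theorem apply_pos_of_norm_sub_single_lt_one {x : EuclideanSpace ℝ ι} {i : ι}
    (hx : ‖x - single i (1 : ℝ)‖ < 1) : 0 < x i := by
  have hx' : ‖x - single i (1 : ℝ)‖ < ‖single i (1 : ℝ)‖ := by simpa using hx
  rw [norm_sub_lt_norm_iff_sq_lt_inner, real_inner_comm, inner_single_left] at hx'
  simp only [map_one, one_mul] at hx'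
  linarith [sq_nonneg ‖x‖]

omit [DecidableEq ι] in
theorem eq_of_norm_eq_of_apply_eq_of_ne {x y : EuclideanSpace ℝ ι} {i : ι}
    (hnorm : ‖x‖ = ‖y‖) (hne : ∀ j, j ≠ i → x j = y j) (hx : 0 ≤ x i) (hy : 0 ≤ y i) :
    x = y := by
  classical
  have hsq : x i ^ 2 = y i ^ 2 := by
    have h := congrArg (· ^ 2) hnorm
    simp only [real_norm_sq_eq, ← Finset.add_sum_erase _ _ (Finset.mem_univ i)] at h
    rwa [Finset.sum_congr rfl fun j hj => by rw [hne j (Finset.ne_of_mem_erase hj)],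
      add_left_inj] at h
  ext j
  by_cases hj : j = i
  · subst hj
    exact (sq_eq_sq₀ hx hy).1 hsq
  · exact hne j hj

end EuclideanSpace

theorem Fin.exists_castLE_eq_of_lt {m n : ℕ} (h : m ≤ n) {j : Fin n} (hj : (j : ℕ) < m) :
    ∃ i : Fin m, Fin.castLE h i = j := by
  rw [← Set.mem_range, Fin.range_castLE]
  exact hj

/-- Injectivity of the change of variables (4.1): for `n ≥ 2`, the map
`x ↦ (1 - |x|², x₁/|x|, …, x_{n-1}/|x|)` is injective on
`{x : |x| ≤ 1, |x - eₙ| < 1}` where `eₙ = (0, …, 0, 1)`. -/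
theorem stmt_18 (n : ℕ) (hn : 2 ≤ n) :
    Set.InjOn
      (fun x : EuclideanSpace ℝ (Fin n) =>
        ((1 - ‖x‖ ^ 2, fun i : Fin (n - 1) => x (Fin.castLE (Nat.sub_le n 1) i) / ‖x‖) :
          ℝ × (Fin (n - 1) → ℝ)))
      {x : EuclideanSpace ℝ (Fin n) |
        ‖x‖ ≤ 1 ∧ ‖x - EuclideanSpace.single (⟨n - 1, by omega⟩ : Fin n) (1 : ℝ)‖ < 1} := by
  rintro x ⟨-, hx⟩ y ⟨-, hy⟩ h
  simp only [Prod.mk.injEq, sub_right_inj] at h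
  obtain ⟨hsq, hcoord⟩ := h
  have hnorm : ‖x‖ = ‖y‖ := (sq_eq_sq₀ (norm_nonneg x) (norm_nonneg y)).1 hsq
  have hxpos := EuclideanSpace.apply_pos_of_norm_sub_single_lt_one hx
  have hx0 : ‖x‖ ≠ 0 := norm_ne_zero_iff.2 fun h0 => by simp [h0] at hxpos
  refine EuclideanSpace.eq_of_norm_eq_of_apply_eq_of_ne hnorm (fun j hj => ?_) hxpos.le
    (EuclideanSpace.apply_pos_of_norm_sub_single_lt_one hy).le
  obtain ⟨i, rfl⟩ := Fin.exists_castLE_eq_of_lt (Nat.sub_le n 1) (j := j)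
    (by have : (j : ℕ) ≠ n - 1 := Fin.val_ne_of_ne hj; omega)
  have hi := congrFun hcoord i
  rw [← hnorm] at hi
  exact (div_left_inj' hx0).1 hi
end
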